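/- Sufficient condition for positivity of the second variation with free endpoints (scalar case): let P, Q : [a,b] → ℝ be continuous with P also C¹ and P > 0 on [a,b], and suppose h : [a,b] → ℝ is a C² solution of (P h')' = Q h with h > 0 on [a,b], h'(a) = 0 and h'(b) ≥ 0. Then for every C¹ function v : [a,b] → ℝ, ∫_a^b (P(x) v'(x)² + Q(x) v(x)²) dx ≥ 0. -/

import Mathlib

/-!
Picone's identity: if `h > 0` solves the Jacobi equation `(P h')' = Q h`, then
`(P h' v² / h)' = P v'² + Q v² - P (v' - h' v / h)²`. Integrating, the second variation is the
boundary term `P h' v² / h |ₐᵇ` plus the integral of a nonnegative function, and the boundary term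
is nonnegative because `h'(a) = 0` and `h'(b) ≥ 0`.
-/

open Set intervalIntegral

theorem hasDerivAt_picone {P Q h h' v : ℝ → ℝ} {v' x : ℝ}
    (hJacobi : HasDerivAt (fun t => P t * h' t) (Q x * h x) x)
    (hh : HasDerivAt h (h' x) x) (hv : HasDerivAt v v' x) (hx : h x ≠ 0) :
    HasDerivAt (fun t => P t * h' t * (v t ^ 2 / h t))
      (P x * v' ^ 2 + Q x * v x ^ 2 - P x * (v' - h' x * v x / h x) ^ 2) x := by
  refine (hJacobi.mul ((hv.pow 2).div hh hx)).congr_deriv ?_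
  simp only [Pi.div_apply, Pi.pow_apply]
  field_simp
  ring

theorem picone_boundary_term_le_integral {a b : ℝ} (hab : a ≤ b) {P Q h h' v v' : ℝ → ℝ}
    (hPc : ContinuousOn P (Icc a b)) (hQc : ContinuousOn Q (Icc a b))
    (hPnonneg : ∀ x ∈ Ioo a b, 0 ≤ P x)
    (hh : ∀ x ∈ Icc a b, HasDerivAt h (h' x) x) (hne : ∀ x ∈ Icc a b, h x ≠ 0)
    (hJacobi : ∀ x ∈ Icc a b, HasDerivAt (fun t => P t * h' t) (Q x * h x) x)
    (hv : ∀ x ∈ Icc a b, HasDerivAt v (v' x) x) (hv'c : ContinuousOn v' (Icc a b)) :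
    P b * h' b * (v b ^ 2 / h b) - P a * h' a * (v a ^ 2 / h a) ≤
      ∫ x in a..b, (P x * v' x ^ 2 + Q x * v x ^ 2) := by
  have hG x (hx : x ∈ Icc a b) := hasDerivAt_picone (hJacobi x hx) (hh x hx) (hv x hx) (hne x hx)
  have hvc : ContinuousOn v (Icc a b) := fun x hx => (hv x hx).continuousAt.continuousWithinAt
  refine sub_le_integral_of_hasDeriv_right_of_le hab
    (fun x hx => (hG x hx).continuousAt.continuousWithinAt)
    (fun x hx => (hG x (Ioo_subset_Icc_self hx)).hasDerivWithinAt)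
    (((hPc.mul (hv'c.pow 2)).add (hQc.mul (hvc.pow 2))).integrableOn_Icc) fun x hx => ?_
  have hsq := mul_nonneg (hPnonneg x hx) (sq_nonneg (v' x - h' x * v x / h x))
  linarith

theorem second_variation_nonneg_free_endpoints_general
    (a b : ℝ) (hab : a < b)
    (P Q : ℝ → ℝ)
    (hPc : ContinuousOn P (Icc a b)) (hQc : ContinuousOn Q (Icc a b))
    (hPpos : ∀ x ∈ Icc a b, 0 < P x)
    (h h' : ℝ → ℝ)
    (hh : ∀ x ∈ Icc a b, HasDerivAt h (h' x) x)
    (hpos : ∀ x ∈ Icc a b, 0 < h x)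
    (hJacobi : ∀ x ∈ Icc a b,
      HasDerivAt (fun t => P t * h' t) (Q x * h x) x)
    (hha : h' a = 0) (hhb : 0 ≤ h' b)
    (v v' : ℝ → ℝ)
    (hv : ∀ x ∈ Icc a b, HasDerivAt v (v' x) x)
    (hv'c : ContinuousOn v' (Icc a b)) :
    0 ≤ ∫ x in a..b, (P x * (v' x) ^ 2 + Q x * (v x) ^ 2) := by
  have hb : b ∈ Icc a b := right_mem_Icc.mpr hab.le
  have hboundary : 0 ≤ P b * h' b * (v b ^ 2 / h b) :=
    mul_nonneg (mul_nonneg (hPpos b hb).le hhb) (div_nonneg (sq_nonneg _) (hpos b hb).le)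
  have hle := picone_boundary_term_le_integral hab.le hPc hQc
    (fun x hx => (hPpos x (Ioo_subset_Icc_self hx)).le) hh (fun x hx => (hpos x hx).ne')
    hJacobi hv hv'c
  rw [hha, mul_zero, zero_mul, sub_zero] at hle
  exact hboundary.trans hle

/-- Sufficient condition for positivity of the second variation with free
endpoints (scalar case). -/
theorem second_variation_nonneg_free_endpoints
    (a b : ℝ) (hab : a < b)
    (P P' Q : ℝ → ℝ)
    (hPc : ContinuousOn P (Icc a b)) (hQc : ContinuousOn Q (Icc a b))
    (hP : ∀ x ∈ Icc a b, HasDerivAt P (P' x) x)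
    (hP'c : ContinuousOn P' (Icc a b))
    (hPpos : ∀ x ∈ Icc a b, 0 < P x)
    (h h' h'' : ℝ → ℝ)
    (hh : ∀ x ∈ Icc a b, HasDerivAt h (h' x) x)
    (hh' : ∀ x ∈ Icc a b, HasDerivAt h' (h'' x) x)
    (hh''c : ContinuousOn h'' (Icc a b))
    (hpos : ∀ x ∈ Icc a b, 0 < h x)
    (hJacobi : ∀ x ∈ Icc a b,
      HasDerivAt (fun t => P t * h' t) (Q x * h x) x)
    (hha : h' a = 0) (hhb : 0 ≤ h' b)
    (v v' : ℝ → ℝ)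
    (hv : ∀ x ∈ Icc a b, HasDerivAt v (v' x) x)
    (hv'c : ContinuousOn v' (Icc a b)) :
    0 ≤ ∫ x in a..b, (P x * (v' x) ^ 2 + Q x * (v x) ^ 2) :=
  second_variation_nonneg_free_endpoints_general a b hab P Q hPc hQc hPpos h h' hh hpos hJacobi hha
    hhb v v' hv hv'c
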